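/- arXiv:math/0309273 — 5 statements merged into one kernel-verified Lean document; each statement's English description precedes it below -/
import Mathlib

section
/- For any two continuous group homomorphisms φ, φ′ : ℤ_p → 𝒪^× one has sup_{a ∈ ℤ_p} |φ(a) − φ′(a)| = |φ(1) − φ′(1)|. In particular, endowing the set Hom_c(ℤ_p, 𝒪^×) of continuous homomorphisms with the metric of uniform convergence, evaluation at 1 is a homeomorphism from Hom_c(ℤ_p, 𝒪^×) onto U_1 = {x ∈ ℂ_p : |x − 1| < 1} with its subspace topology. -/
/-!
Since `ℕ` is dense in `ℤ_[p]`, a continuous character `κ` is determined by `κ 1`, and on `n : ℕ`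
we have `κ n - κ' n = κ 1 ^ n - κ' 1 ^ n`, whose norm is at most `‖κ 1 - κ' 1‖` in an ultrametric
ring when `‖κ 1‖, ‖κ' 1‖ ≤ 1`; so evaluation at `1` is an isometry for the uniform metric.
Its image is `U₁`: the iterated forward differences of `κ` at `0` are `(κ 1 - 1) ^ n`, which tend
to `0` by Mahler's theorem, forcing `‖κ 1 - 1‖ < 1`; conversely, for `‖r‖ < 1` the Mahler series
`a ↦ ∑ₙ (a choose n) rⁿ` is a continuous character taking the value `1 + r` at `1`.
-/

namespace IsUltrametricDist

theorem norm_pow_sub_pow_le {R : Type*} [NormedCommRing R] [NormOneClass R] [IsUltrametricDist R]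
    {u v : R} (hu : ‖u‖ ≤ 1) (hv : ‖v‖ ≤ 1) (n : ℕ) : ‖u ^ n - v ^ n‖ ≤ ‖u - v‖ := by
  have hpow {w : R} (hw : ‖w‖ ≤ 1) (k : ℕ) : ‖w ^ k‖ ≤ 1 :=
    (_root_.norm_pow_le w k).trans (pow_le_one₀ (norm_nonneg w) hw)
  rw [← geom_sum₂_mul]
  refine (norm_mul_le _ _).trans <| mul_le_of_le_one_left (norm_nonneg _) <|
    norm_sum_le_of_forall_le_of_nonneg zero_le_one fun i _ => ?_
  exact (norm_mul_le _ _).trans <| mul_le_one₀ (hpow hu i) (norm_nonneg _) (hpow hv _)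

theorem norm_eq_one_of_norm_sub_one_lt {R : Type*} [NormedRing R] [NormOneClass R]
    [IsUltrametricDist R] {x : R} (hx : ‖x - 1‖ < 1) : ‖x‖ = 1 := by
  rw [← sub_add_cancel x 1, norm_add_eq_max_of_norm_ne_norm (by simpa using hx.ne),
    norm_one, max_eq_right hx.le]

end IsUltrametricDist

variable {p : ℕ} [Fact p.Prime]

namespace PadicInt

/-- Not a global instance: for `R = ℚ_[p]` it would form a diamond with `PadicInt.algebra`. -/
noncomputable abbrev algebraOfAlgebraPadic (R : Type*) [Semiring R] [Algebra ℚ_[p] R] :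
    Algebra ℤ_[p] R :=
  Algebra.compHom R (algebraMap ℤ_[p] ℚ_[p])

theorem isBoundedSMul_of_normedAlgebraPadic (R : Type*) [NormedRing R] [NormedAlgebra ℚ_[p] R] :
    letI := algebraOfAlgebraPadic (p := p) R
    IsBoundedSMul ℤ_[p] R :=
  letI := algebraOfAlgebraPadic (p := p) R
  IsBoundedSMul.of_norm_smul_le fun a x => norm_smul_le (a : ℚ_[p]) x

end PadicInt

theorem AddChar.norm_sub_le_norm_sub_eval_one {R : Type*} [NormedCommRing R] [NormOneClass R]
    [IsUltrametricDist R] {κ κ' : AddChar ℤ_[p] R} (hκ : Continuous κ) (hκ' : Continuous κ')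
    (h1 : ‖κ 1‖ ≤ 1) (h1' : ‖κ' 1‖ ≤ 1) (a : ℤ_[p]) : ‖κ a - κ' a‖ ≤ ‖κ 1 - κ' 1‖ := by
  refine PadicInt.denseRange_natCast.induction_on a
    (isClosed_le (hκ.sub hκ').norm continuous_const) fun n => ?_
  rw [← nsmul_one, AddChar.map_nsmul_eq_pow, AddChar.map_nsmul_eq_pow]
  exact IsUltrametricDist.norm_pow_sub_pow_le h1 h1' n

variable {K : Type*} [NormedField K] [IsUltrametricDist K]

section NormedAlgebra

variable [NormedAlgebra ℚ_[p] K]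

attribute [local instance] PadicInt.algebraOfAlgebraPadic
  PadicInt.isBoundedSMul_of_normedAlgebraPadic

theorem AddChar.norm_eval_one_sub_one_lt {κ : AddChar ℤ_[p] K} (hκ : Continuous κ) :
    ‖κ 1 - 1‖ < 1 :=
  tendsto_pow_atTop_nhds_zero_iff_norm_lt_one.mp (κ.tendsto_eval_one_sub_pow hκ)

theorem AddChar.norm_apply_eq_one {κ : AddChar ℤ_[p] K} (hκ : Continuous κ) (a : ℤ_[p]) :
    ‖κ a‖ = 1 := by
  have h1 := AddChar.norm_eval_one_sub_one_lt hκ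
  refine IsUltrametricDist.norm_eq_one_of_norm_sub_one_lt (lt_of_le_of_lt ?_ h1)
  simpa using AddChar.norm_sub_le_norm_sub_eval_one (κ' := 1) hκ continuous_const
    (IsUltrametricDist.norm_eq_one_of_norm_sub_one_lt h1).le (by simp) a

end NormedAlgebra

namespace PadicInt

variable (p K) in
def continuousUnitChar : Set C(ℤ_[p], K) :=
  {φ | (∀ a b, φ (a + b) = φ a * φ b) ∧ ∀ a, ‖φ a‖ = 1}

namespace continuousUnitChar

variable {φ ψ : C(ℤ_[p], K)}

noncomputable def toAddChar (hφ : φ ∈ continuousUnitChar p K) : AddChar ℤ_[p] K where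
  toFun := φ
  map_zero_eq_one' := by
    have h0 : φ 0 ≠ 0 := norm_ne_zero_iff.mp (by simp [hφ.2 0])
    simpa [h0] using (hφ.1 0 0).symm
  map_add_eq_mul' := hφ.1

theorem dist_eq_dist_eval_one (hφ : φ ∈ continuousUnitChar p K)
    (hψ : ψ ∈ continuousUnitChar p K) : dist φ ψ = dist (φ 1) (ψ 1) := by
  refine le_antisymm ((ContinuousMap.dist_le dist_nonneg).2 fun a => ?_)
    (ContinuousMap.dist_apply_le_dist 1)
  rw [dist_eq_norm, dist_eq_norm]
  exact AddChar.norm_sub_le_norm_sub_eval_one (κ := toAddChar hφ) (κ' := toAddChar hψ)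
    φ.continuous ψ.continuous (hφ.2 1).le (hψ.2 1).le a

variable [NormedAlgebra ℚ_[p] K]

attribute [local instance] algebraOfAlgebraPadic isBoundedSMul_of_normedAlgebraPadic

theorem mk_mem {κ : AddChar ℤ_[p] K} (hκ : Continuous κ) :
    (⟨κ, hκ⟩ : C(ℤ_[p], K)) ∈ continuousUnitChar p K :=
  ⟨κ.map_add_eq_mul, κ.norm_apply_eq_one hκ⟩

noncomputable def evalOneEquiv [CompleteSpace K] :
    continuousUnitChar p K ≃ᵢ {x : K // ‖x - 1‖ < 1} where
  toFun φ := ⟨φ.1 1, (toAddChar φ.2).norm_eval_one_sub_one_lt φ.1.continuous⟩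
  invFun x :=
    have hx := tendsto_pow_atTop_nhds_zero_iff_norm_lt_one.mpr x.2
    ⟨_, mk_mem (continuous_addChar_of_value_at_one hx)⟩
  left_inv φ := Subtype.ext <| dist_eq_zero.mp <| by
    rw [dist_eq_dist_eval_one (Subtype.prop _) φ.2]
    simp
  right_inv x := Subtype.ext <| by simp
  isometry_toFun := Isometry.of_dist_eq fun φ ψ => (dist_eq_dist_eval_one φ.2 ψ.2).symm

end continuousUnitChar

end PadicInt

open PadicInt in
theorem evaluation_at_one_isometry_and_homeomorphism_general
    {p : ℕ} [Fact (Nat.Prime p)]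
    {Cp : Type} [NormedField Cp] [CompleteSpace Cp]
    [IsUltrametricDist Cp] [NormedAlgebra ℚ_[p] Cp] :
    (∀ φ φ' : C(ℤ_[p], Cp),
      (∀ a b : ℤ_[p], φ (a + b) = φ a * φ b) → (∀ a : ℤ_[p], ‖φ a‖ = 1) →
      (∀ a b : ℤ_[p], φ' (a + b) = φ' a * φ' b) → (∀ a : ℤ_[p], ‖φ' a‖ = 1) →
      (⨆ a : ℤ_[p], ‖φ a - φ' a‖) = ‖φ 1 - φ' 1‖) ∧
    ∃ h : {φ : C(ℤ_[p], Cp) //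
            (∀ a b : ℤ_[p], φ (a + b) = φ a * φ b) ∧ ∀ a : ℤ_[p], ‖φ a‖ = 1} ≃ₜ
          {x : Cp // ‖x - 1‖ < 1},
      ∀ φ, (h φ : Cp) = φ.1 1 := by
  refine ⟨fun φ φ' hφ₁ hφ₂ hφ'₁ hφ'₂ => ?_, continuousUnitChar.evalOneEquiv.toHomeomorph,
    fun _ => rfl⟩
  rw [← dist_eq_norm, ← continuousUnitChar.dist_eq_dist_eval_one ⟨hφ₁, hφ₂⟩ ⟨hφ'₁, hφ'₂⟩,
    ContinuousMap.dist_eq_iSup]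
  simp only [dist_eq_norm]

/-- For any two continuous group homomorphisms `φ, φ' : ℤ_p → 𝒪ˣ` one has
`sup_{a} ‖φ a - φ' a‖ = ‖φ 1 - φ' 1‖`.  In particular, endowing the set
`Hom_c(ℤ_p, 𝒪ˣ)` (realized as the subspace of `C(ℤ_p, ℂ_p)` of multiplicative norm-one
valued maps, with the uniform-convergence topology) with its natural topology, evaluation
at `1` is a homeomorphism onto `U₁ = {x : ‖x - 1‖ < 1}` with its subspace topology.
Here `Cp` is any field satisfying the characterizing properties of `ℂ_p`. -/
theorem evaluation_at_one_isometry_and_homeomorphism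
    {p : ℕ} [Fact (Nat.Prime p)]
    {Cp : Type} [NormedField Cp] [CompleteSpace Cp] [IsAlgClosed Cp]
    [IsUltrametricDist Cp] [NormedAlgebra ℚ_[p] Cp]
    (hdense : Dense {x : Cp | IsAlgebraic ℚ_[p] x}) :
    (∀ φ φ' : C(ℤ_[p], Cp),
      (∀ a b : ℤ_[p], φ (a + b) = φ a * φ b) → (∀ a : ℤ_[p], ‖φ a‖ = 1) →
      (∀ a b : ℤ_[p], φ' (a + b) = φ' a * φ' b) → (∀ a : ℤ_[p], ‖φ' a‖ = 1) →
      (⨆ a : ℤ_[p], ‖φ a - φ' a‖) = ‖φ 1 - φ' 1‖) ∧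
    ∃ h : {φ : C(ℤ_[p], Cp) //
            (∀ a b : ℤ_[p], φ (a + b) = φ a * φ b) ∧ ∀ a : ℤ_[p], ‖φ a‖ = 1} ≃ₜ
          {x : Cp // ‖x - 1‖ < 1},
      ∀ φ, (h φ : Cp) = φ.1 1 :=
  evaluation_at_one_isometry_and_homeomorphism_general
end

section
/- On the set of continuous group homomorphisms ℤ_p → 𝒪^×, the topology of pointwise convergence coincides with the topology of uniform convergence. -/
theorem char_dist_le {p : ℕ} [Fact (Nat.Prime p)] {Cp : Type} [NormedField Cp]
    [IsUltrametricDist Cp]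
    (φ ψ : C(ℤ_[p], Cp))
    (hφm : ∀ a b, φ (a+b) = φ a * φ b) (hφn : ∀ a, ‖φ a‖ = 1)
    (hψm : ∀ a b, ψ (a+b) = ψ a * ψ b) (hψn : ∀ a, ‖ψ a‖ = 1) :
    ∀ x, ‖φ x - ψ x‖ ≤ ‖φ 1 - ψ 1‖ := by
  set c := ‖φ 1 - ψ 1‖ with hc
  have h0 : ∀ (χ : C(ℤ_[p], Cp)), (∀ a b, χ (a+b) = χ a * χ b) →
      (∀ a, ‖χ a‖ = 1) → χ 0 = 1 := by
    intro χ hm hn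
    have h := hm 0 0
    rw [add_zero] at h
    have hne : χ 0 ≠ 0 := by
      intro h'
      have := hn 0
      rw [h', norm_zero] at this
      norm_num at this
    nth_rewrite 1 [← mul_one (χ 0)] at h
    exact (mul_left_cancel₀ hne h).symm
  have hnat : ∀ n : ℕ, ‖φ (n : ℤ_[p]) - ψ (n : ℤ_[p])‖ ≤ c := by
    intro n
    induction n with
    | zero =>
      simp only [Nat.cast_zero, h0 φ hφm hφn, h0 ψ hψm hψn, sub_self, norm_zero, hc]
      positivity
    | succ n ih =>
      push_cast
      calc ‖φ (↑n + 1) - ψ (↑n + 1)‖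
          = ‖φ ↑n * (φ 1 - ψ 1) + (φ ↑n - ψ ↑n) * ψ 1‖ := by
            rw [hφm, hψm]; congr 1; ring
        _ ≤ max (‖φ ↑n * (φ 1 - ψ 1)‖) (‖(φ ↑n - ψ ↑n) * ψ 1‖) :=
            IsUltrametricDist.norm_add_le_max _ _
        _ ≤ c := by
            apply max_le
            · rw [norm_mul, hφn]; simp [hc]
            · rw [norm_mul, hψn]; simpa using ih
  intro x
  refine PadicInt.denseRange_natCast.induction_on x ?_ hnat
  exact isClosed_le ((φ.continuous.sub ψ.continuous).norm) continuous_const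

/-- On the set of continuous group homomorphisms `ℤ_p → 𝒪ˣ` (realized as the
multiplicative norm-one valued maps in `C(ℤ_p, ℂ_p)`, which carries the topology of
uniform convergence since `ℤ_p` is compact), the topology of pointwise convergence
coincides with the topology of uniform convergence: the natural map to the product space
`ℤ_p → ℂ_p` is inducing.  Here `Cp` is any field satisfying the characterizing
properties of `ℂ_p`. -/
theorem pointwise_eq_uniform_on_characters
    {p : ℕ} [Fact (Nat.Prime p)]
    {Cp : Type} [NormedField Cp] [CompleteSpace Cp] [IsAlgClosed Cp]
    [IsUltrametricDist Cp] [NormedAlgebra ℚ_[p] Cp]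
    (hdense : Dense {x : Cp | IsAlgebraic ℚ_[p] x}) :
    Topology.IsInducing (fun φ : {φ : C(ℤ_[p], Cp) //
        (∀ a b : ℤ_[p], φ (a + b) = φ a * φ b) ∧ ∀ a : ℤ_[p], ‖φ a‖ = 1} =>
      (⇑(φ : C(ℤ_[p], Cp)) : ℤ_[p] → Cp)) := by
  rw [Topology.isInducing_iff_nhds]
  intro φ
  apply le_antisymm
  · exact ((continuous_coeFun.comp continuous_subtype_val).tendsto φ).le_comap
  · rw [Metric.nhds_basis_ball.ge_iff]
    intro ε hε
    refine Filter.mem_comap.mpr ⟨{g : ℤ_[p] → Cp | dist (g 1) ((φ : C(ℤ_[p], Cp)) 1) < ε}, ?_, ?_⟩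
    · exact (continuous_apply (1 : ℤ_[p]) : Continuous fun g : ℤ_[p] → Cp => g 1).continuousAt.preimage_mem_nhds
        (Metric.ball_mem_nhds _ hε)
    · intro ψ hψ
      rw [Set.mem_preimage, Set.mem_setOf_eq] at hψ
      rw [Metric.mem_ball, Subtype.dist_eq]
      refine lt_of_le_of_lt ?_ hψ
      rw [show dist ((ψ : C(ℤ_[p], Cp)) 1) ((φ : C(ℤ_[p], Cp)) 1)
            = ‖(ψ : C(ℤ_[p], Cp)) 1 - (φ : C(ℤ_[p], Cp)) 1‖ from dist_eq_norm _ _]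
      refine (ContinuousMap.dist_le (norm_nonneg _)).mpr ?_
      intro x
      rw [dist_eq_norm]
      exact char_dist_le _ _ ψ.2.1 ψ.2.2 φ.2.1 φ.2.2 x
end

section
/- Existence of invariant lattices: let G be a compact topological group, V a finite-dimensional ℂ_p-vector space, and ρ : G → GL(V) a group homomorphism such that the action G × V → V is continuous. Then there exists an 𝒪-submodule Γ ⊆ V which is a free 𝒪-module of rank equal to dim_{ℂ_p} V, which spans V over ℂ_p, and which is G-stable: ρ(g)Γ = Γ for all g ∈ G. -/
section OSpan

variable {Cp : Type} [NormedField Cp] [IsUltrametricDist Cp]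
variable {V : Type} [AddCommGroup V] [Module Cp V]

/-- The set of linear combinations with coefficients of norm at most 1. -/
def OS (Cp : Type) [NormedField Cp] {V : Type} [AddCommGroup V] [Module Cp V]
    {ι : Type} [Fintype ι] (w : ι → V) : Set V :=
  {v | ∃ c : ι → Cp, (∀ i, ‖c i‖ ≤ 1) ∧ v = ∑ i, c i • w i}

lemma mem_OS_reindex {ι κ : Type} [Fintype ι] [Fintype κ] (w : κ → V) (f : ι → κ)
    (d : ι → Cp) (hd : ∀ i, ‖d i‖ ≤ 1) : (∑ i, d i • w (f i)) ∈ OS Cp w := by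
  classical
  refine ⟨fun k => ∑ i ∈ Finset.univ.filter (fun i => f i = k), d i, ?_, ?_⟩
  · intro k
    exact IsUltrametricDist.norm_sum_le_of_forall_le_of_nonneg zero_le_one
      (fun i _ => hd i)
  · rw [← Finset.sum_fiberwise Finset.univ f (fun i => d i • w (f i))]
    refine Finset.sum_congr rfl fun k _ => ?_
    rw [Finset.sum_smul]
    refine Finset.sum_congr rfl fun i hi => ?_
    rw [(Finset.mem_filter.mp hi).2]

lemma mem_OS_self {ι : Type} [Fintype ι] (w : ι → V) (i : ι) : w i ∈ OS Cp w := by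
  have := mem_OS_reindex (ι := PUnit) w (fun _ => i) (fun _ => (1 : Cp))
    (fun _ => by simp)
  simpa using this

lemma OS_subset {ι κ : Type} [Fintype ι] [Fintype κ] {w : κ → V} {u : ι → V}
    (h : ∀ i, u i ∈ OS Cp w) : OS Cp u ⊆ (OS Cp w : Set V) := by
  rintro v ⟨c, hc, rfl⟩
  choose d hd hval using h
  refine ⟨fun k => ∑ i, c i * d i k, ?_, ?_⟩
  · intro k
    refine IsUltrametricDist.norm_sum_le_of_forall_le_of_nonneg zero_le_one
      (fun i _ => ?_)
    rw [norm_mul]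
    exact mul_le_one₀ (hc i) (norm_nonneg _) (hd i k)
  · calc ∑ i, c i • u i = ∑ i, ∑ k, (c i * d i k) • w k := by
          refine Finset.sum_congr rfl fun i _ => ?_
          rw [hval i, Finset.smul_sum]
          exact Finset.sum_congr rfl fun k _ => smul_smul _ _ _
      _ = ∑ k, (∑ i, c i * d i k) • w k := by
          rw [Finset.sum_comm]
          exact Finset.sum_congr rfl fun k _ => (Finset.sum_smul).symm

lemma OS_eq_of {ι κ : Type} [Fintype ι] [Fintype κ] {w : κ → V} {u : ι → V}
    (h : ∀ i, u i ∈ OS Cp w) (h' : ∀ k, w k ∈ OS Cp u) : OS Cp u = (OS Cp w : Set V) :=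
  le_antisymm (OS_subset h) (OS_subset h')

lemma exists_li_OS : ∀ (m : ℕ) (w : Fin m → V),
    ∃ (k : ℕ) (b : Fin k → V), LinearIndependent Cp b ∧ OS Cp b = OS Cp w := by
  intro m
  induction m with
  | zero =>
    intro w
    exact ⟨0, w, linearIndependent_empty_type, rfl⟩
  | succ m IH =>
    intro w
    by_cases hli : LinearIndependent Cp w
    · exact ⟨m + 1, w, hli, rfl⟩
    · obtain ⟨c, hsum, i₀, hi₀⟩ := Fintype.not_linearIndependent_iff.mp hli
      obtain ⟨j, -, hj⟩ := Finset.exists_max_image Finset.univ (fun i => ‖c i‖)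
        ⟨i₀, Finset.mem_univ _⟩
      have hcj : c j ≠ 0 := by
        intro h
        refine hi₀ (norm_le_zero_iff.mp ?_)
        simpa [h] using hj i₀ (Finset.mem_univ _)
      set w' : Fin m → V := w ∘ j.succAbove with hw'
      have hkey : OS Cp w' = OS Cp w := by
        refine OS_eq_of (fun i => mem_OS_self w (j.succAbove i)) (fun i => ?_)
        rcases eq_or_ne i j with heq | hne
        · -- w j is a bounded combination of the others
          rw [heq]
          have hsum' : c j • w j + ∑ i, c (j.succAbove i) • w (j.succAbove i) = 0 := by
            rw [Fin.sum_univ_succAbove (fun i => c i • w i) j] at hsum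
            exact hsum
          have hwj : w j = ∑ i, (-(c (j.succAbove i)) / c j) • w' i := by
            have h2 : w j = (c j)⁻¹ • -(∑ i, c (j.succAbove i) • w (j.succAbove i)) := by
              rw [← eq_neg_of_add_eq_zero_left hsum', smul_smul, inv_mul_cancel₀ hcj,
                one_smul]
            rw [h2, ← Finset.sum_neg_distrib, Finset.smul_sum]
            refine Finset.sum_congr rfl fun i _ => ?_
            rw [← neg_smul, smul_smul,
              show (c j)⁻¹ * -c (j.succAbove i) = -c (j.succAbove i) / c j from by ring]
            rfl
          rw [hwj]
          refine ⟨fun i => -(c (j.succAbove i)) / c j, fun i => ?_, rfl⟩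
          rw [norm_div, norm_neg]
          exact div_le_one_of_le₀ (hj _ (Finset.mem_univ _)) (norm_nonneg _)
        · obtain ⟨i', rfl⟩ := Fin.exists_succAbove_eq hne
          exact mem_OS_self w' i'
      obtain ⟨k, b, hb, hbeq⟩ := IH w'
      exact ⟨k, b, hb, hbeq.trans hkey⟩

end OSpan

/-- Existence of invariant lattices: let `G` be a compact topological group,
`V` a finite-dimensional `ℂ_p`-vector space and `ρ : G → GL(V)` a homomorphism with
continuous action `G × V → V`.  Then there is an `𝒪`-lattice `Γ ⊆ V` — the `𝒪`-span of a
basis `b` of `V`, hence a free `𝒪`-module of rank `dim V` spanning `V` — with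
`ρ(g) Γ = Γ` for all `g ∈ G`.  Here `Cp` is any field satisfying the characterizing
properties of `ℂ_p`. -/
theorem exists_invariant_lattice
    {p : ℕ} [Fact (Nat.Prime p)]
    {Cp : Type} [NormedField Cp] [CompleteSpace Cp] [IsAlgClosed Cp]
    [IsUltrametricDist Cp] [NormedAlgebra ℚ_[p] Cp]
    (hdense : Dense {x : Cp | IsAlgebraic ℚ_[p] x})
    {G : Type} [Group G] [TopologicalSpace G] [IsTopologicalGroup G] [CompactSpace G]
    {V : Type} [NormedAddCommGroup V] [NormedSpace Cp V] [FiniteDimensional Cp V]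
    (ρ : G →* (V ≃ₗ[Cp] V))
    (hρ : Continuous fun gv : G × V => ρ gv.1 gv.2) :
    ∃ (b : Fin (Module.finrank Cp V) → V) (Γ : Set V),
      LinearIndependent Cp b ∧
      Submodule.span Cp (Set.range b) = ⊤ ∧
      Γ = {v : V | ∃ c : Fin (Module.finrank Cp V) → Cp,
            (∀ i, ‖c i‖ ≤ 1) ∧ v = ∑ i, c i • b i} ∧
      ∀ g : G, (fun v => ρ g v) '' Γ = Γ := by
  classical
  -- Cp is nontrivially normed
  letI : NontriviallyNormedField Cp := by
    refine ⟨⟨(algebraMap ℚ_[p] Cp (p : ℚ_[p]))⁻¹, ?_⟩⟩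
    rw [norm_inv, norm_algebraMap', Padic.norm_p, inv_inv]
    exact_mod_cast (Fact.out : Nat.Prime p).one_lt
  set n := Module.finrank Cp V with hn
  set b0 : Module.Basis (Fin n) Cp V := Module.finBasis Cp V with hb0
  set L : Set V := OS Cp (⇑b0) with hLdef
  -- L is open
  have hLopen : IsOpen L := by
    have hLeq : L = ⇑b0.equivFun ⁻¹' {f : Fin n → Cp | ∀ i, ‖f i‖ ≤ 1} := by
      ext v
      constructor
      · rintro ⟨c, hc, rfl⟩
        have : b0.equivFun (∑ i, c i • b0 i) = c := by
          rw [← b0.equivFun_symm_apply, LinearEquiv.apply_symm_apply]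
        show ∀ i, ‖b0.equivFun (∑ i, c i • b0 i) i‖ ≤ 1
        rw [this]; exact hc
      · intro hv
        refine ⟨b0.equivFun v, hv, ?_⟩
        conv_lhs => rw [← b0.equivFun.symm_apply_apply v]
        rw [b0.equivFun_symm_apply]
    rw [hLeq]
    have hcont : Continuous (⇑b0.equivFun) :=
      LinearMap.continuous_of_finiteDimensional (b0.equivFun : V →ₗ[Cp] (Fin n → Cp))
    refine hcont.isOpen_preimage _ ?_
    have : {f : Fin n → Cp | ∀ i, ‖f i‖ ≤ 1} =
        ⋂ i, (fun f : Fin n → Cp => f i) ⁻¹' (Metric.closedBall 0 1) := by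
      ext f; simp [Metric.mem_closedBall, dist_zero_right]
    rw [this]
    exact isOpen_iInter_of_finite fun i =>
      (IsUltrametricDist.isOpen_closedBall (0 : Cp) one_ne_zero).preimage
        (continuous_apply i)
  have hmemL : ∀ i, b0 i ∈ L := fun i => mem_OS_self (⇑b0) i
  -- algebra of the images under ρ
  have hcomp : ∀ (a b : G) (v : V), ρ a (ρ b v) = ρ (a * b) v := by
    intro a b v; rw [map_mul]; rfl
  have hone : ∀ v : V, ρ 1 v = v := by
    intro v; rw [map_one]; rfl
  have himg_comp : ∀ (a b : G) (S : Set V),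
      (fun v => ρ a v) '' ((fun v => ρ b v) '' S) = (fun v => ρ (a * b) v) '' S := by
    intro a b S
    rw [← Set.image_comp]
    refine Set.image_congr fun v _ => hcomp a b v
  -- the stabilizer subgroup of L
  set H : Subgroup G :=
    { carrier := {g | (fun v => ρ g v) '' L = L}
      one_mem' := by
        simp only [Set.mem_setOf_eq]
        have : (fun v => ρ (1 : G) v) = id := funext fun v => hone v
        rw [this, Set.image_id]
      mul_mem' := by
        intro a b ha hb
        simp only [Set.mem_setOf_eq] at ha hb ⊢
        rw [← himg_comp a b L, hb, ha]
      inv_mem' := by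
        intro a ha
        simp only [Set.mem_setOf_eq] at ha ⊢
        conv_lhs => rw [← ha]
        rw [himg_comp a⁻¹ a L, inv_mul_cancel]
        have : (fun v => ρ (1 : G) v) = id := funext fun v => hone v
        rw [this, Set.image_id] } with hHdef
  -- a criterion for membership in H
  have hsub_of : ∀ g : G, (∀ i, ρ g (b0 i) ∈ L) → (fun v => ρ g v) '' L ⊆ L := by
    intro g hg
    rintro _ ⟨v, ⟨c, hc, rfl⟩, rfl⟩
    show ρ g (∑ i, c i • b0 i) ∈ L
    have : ρ g (∑ i, c i • b0 i) = ∑ i, c i • ρ g (b0 i) := by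
      rw [map_sum]; exact Finset.sum_congr rfl fun i _ => map_smul _ _ _
    rw [this]
    exact OS_subset (w := ⇑b0) (fun i => hg i) ⟨c, hc, rfl⟩
  have hmemH : ∀ g : G, (∀ i, ρ g (b0 i) ∈ L) → (∀ i, ρ g⁻¹ (b0 i) ∈ L) → g ∈ H := by
    intro g h1 h2
    have hsub1 := hsub_of g h1
    have hsub2 := hsub_of g⁻¹ h2
    refine le_antisymm hsub1 ?_
    intro v hv
    have : v ∈ (fun v => ρ g v) '' ((fun v => ρ g⁻¹ v) '' L) := by
      rw [himg_comp g g⁻¹ L, mul_inv_cancel]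
      have : (fun v => ρ (1 : G) v) = id := funext fun v => hone v
      rw [this, Set.image_id]; exact hv
    obtain ⟨u, hu, rfl⟩ := this
    exact Set.mem_image_of_mem _ (hsub2 hu)
  -- H is open
  have hHopen : IsOpen (H : Set G) := by
    refine Subgroup.isOpen_of_mem_nhds H (g := 1) ?_
    have hU : ∀ i : Fin n, IsOpen {g : G | ρ g (b0 i) ∈ L} := by
      intro i
      have : Continuous fun g : G => ρ g (b0 i) :=
        hρ.comp (continuous_id.prodMk continuous_const)
      exact hLopen.preimage this
    have hU' : ∀ i : Fin n, IsOpen {g : G | ρ g⁻¹ (b0 i) ∈ L} := by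
      intro i
      have : Continuous fun g : G => ρ g⁻¹ (b0 i) :=
        hρ.comp (continuous_inv.prodMk continuous_const)
      exact hLopen.preimage this
    have hUopen : IsOpen ((⋂ i, {g : G | ρ g (b0 i) ∈ L}) ∩
        (⋂ i, {g : G | ρ g⁻¹ (b0 i) ∈ L})) :=
      (isOpen_iInter_of_finite hU).inter (isOpen_iInter_of_finite hU')
    refine Filter.mem_of_superset (hUopen.mem_nhds ?_) ?_
    · constructor <;> refine Set.mem_iInter.mpr fun i => ?_ <;>
        simp only [Set.mem_setOf_eq, inv_one, hone] <;> exact hmemL i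
    · rintro g ⟨hg1, hg2⟩
      exact hmemH g (fun i => Set.mem_iInter.mp hg1 i) (fun i => Set.mem_iInter.mp hg2 i)
  -- the quotient is finite
  have hfin : Finite (G ⧸ H) := Subgroup.quotient_finite_of_isOpen H hHopen
  letI : Fintype (G ⧸ H) := Fintype.ofFinite _
  -- the generating family of the lattice
  set w : (G ⧸ H) × Fin n → V := fun x => ρ (Quotient.out x.1) (b0 x.2) with hwdef
  -- cosets
  have hcoset : ∀ (g : G) (q : G ⧸ H), ∃ (q' : G ⧸ H) (h : G), h ∈ H ∧
      g * Quotient.out q = Quotient.out q' * h := by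
    intro g q
    refine ⟨(↑(g * Quotient.out q) : G ⧸ H),
      (Quotient.out (↑(g * Quotient.out q) : G ⧸ H))⁻¹ * (g * Quotient.out q), ?_, ?_⟩
    · refine QuotientGroup.eq.mp ?_
      rw [QuotientGroup.out_eq']
    · group
  have hLmem_ofH : ∀ h : G, h ∈ H → ∀ v ∈ L, ρ h v ∈ L := by
    intro h hh v hv
    have : ρ h v ∈ (fun v => ρ h v) '' L := Set.mem_image_of_mem _ hv
    rwa [hh] at this
  -- images of L under coset representatives land in OS Cp w
  have hrep : ∀ (q : G ⧸ H) (v : V), v ∈ L → ρ (Quotient.out q) v ∈ OS Cp w := by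
    rintro q v ⟨d, hd, rfl⟩
    have : ρ (Quotient.out q) (∑ j, d j • b0 j) =
        ∑ j, d j • w (q, j) := by
      rw [map_sum]; exact Finset.sum_congr rfl fun j _ => map_smul _ _ _
    rw [this]
    exact mem_OS_reindex w (fun j => (q, j)) d hd
  have hWmem : ∀ (g : G) (x : (G ⧸ H) × Fin n), ρ g (w x) ∈ OS Cp w := by
    intro g x
    obtain ⟨q', h, hh, heq⟩ := hcoset g x.1
    have : ρ g (w x) = ρ (Quotient.out q') (ρ h (b0 x.2)) := by
      rw [hwdef]
      simp only
      rw [hcomp, hcomp, heq]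
    rw [this]
    exact hrep q' _ (hLmem_ofH h hh _ (hmemL x.2))
  -- OS Cp w is G-stable
  have hstab_sub : ∀ g : G, (fun v => ρ g v) '' OS Cp w ⊆ OS Cp w := by
    intro g
    rintro _ ⟨v, ⟨c, hc, rfl⟩, rfl⟩
    show ρ g (∑ x, c x • w x) ∈ OS Cp w
    have : ρ g (∑ x, c x • w x) = ∑ x, c x • ρ g (w x) := by
      rw [map_sum]; exact Finset.sum_congr rfl fun x _ => map_smul _ _ _
    rw [this]
    exact OS_subset (fun x => hWmem g x) ⟨c, hc, rfl⟩
  have hstab : ∀ g : G, (fun v => ρ g v) '' OS Cp w = OS Cp w := by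
    intro g
    refine le_antisymm (hstab_sub g) ?_
    intro v hv
    have : v ∈ (fun v => ρ g v) '' ((fun v => ρ g⁻¹ v) '' OS Cp w) := by
      rw [himg_comp g g⁻¹ _, mul_inv_cancel]
      have h1 : (fun v => ρ (1 : G) v) = id := funext fun v => hone v
      rw [h1, Set.image_id]; exact hv
    obtain ⟨u, hu, rfl⟩ := this
    exact Set.mem_image_of_mem _ (hstab_sub g⁻¹ hu)
  -- L is contained in OS Cp w
  have hLsub : L ⊆ OS Cp w := by
    intro v hv
    set q1 : G ⧸ H := ((1 : G) : G ⧸ H) with hq1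
    have hq1H : Quotient.out q1 ∈ H := by
      have : ((1 : G) : G ⧸ H) = ((Quotient.out q1 : G) : G ⧸ H) := by
        rw [QuotientGroup.out_eq']
      have := QuotientGroup.eq.mp this
      simpa using this
    have hv' : ρ (Quotient.out q1)⁻¹ v ∈ L :=
      hLmem_ofH _ (H.inv_mem hq1H) v hv
    have : v = ρ (Quotient.out q1) (ρ (Quotient.out q1)⁻¹ v) := by
      rw [hcomp, mul_inv_cancel, hone]
    rw [this]
    exact hrep q1 _ hv'
  -- extract a linearly independent family generating the same OS
  obtain ⟨e⟩ : Nonempty ((G ⧸ H) × Fin n ≃ Fin (Fintype.card ((G ⧸ H) × Fin n))) :=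
    ⟨Fintype.equivFin _⟩
  have hOSe : OS Cp (w ∘ e.symm) = OS Cp w := by
    refine OS_eq_of (fun i => ?_) (fun x => ?_)
    · exact mem_OS_self w (e.symm i)
    · have h1 := mem_OS_self (Cp := Cp) (w ∘ e.symm) (e x)
      have h2 : (w ∘ e.symm) (e x) = w x := by simp
      rwa [h2] at h1
  obtain ⟨k, b, hbli, hbeq⟩ := exists_li_OS (Cp := Cp) _ (w ∘ e.symm)
  have hbOS : OS Cp b = OS Cp w := hbeq.trans hOSe
  -- span of b is everything
  have hspan : Submodule.span Cp (Set.range b) = ⊤ := by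
    refine eq_top_iff.mpr ?_
    rw [← b0.span_eq]
    refine Submodule.span_le.mpr ?_
    rintro _ ⟨i, rfl⟩
    have : b0 i ∈ OS Cp b := hbOS ▸ hLsub (hmemL i)
    obtain ⟨c, -, hceq⟩ := this
    rw [hceq]
    exact Submodule.sum_mem _ fun j _ =>
      Submodule.smul_mem _ _ (Submodule.subset_span (Set.mem_range_self j))
  -- k = n
  have hk : n = k := by
    have hB := Module.Basis.mk hbli (le_of_eq hspan.symm)
    have := Module.finrank_eq_card_basis hB
    simpa [hn] using this
  set e2 : Fin n ≃ Fin k := finCongr hk with he2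
  refine ⟨b ∘ e2, OS Cp (b ∘ e2), hbli.comp e2 e2.injective, ?_, rfl, ?_⟩
  · rwa [Set.range_comp, e2.surjective.range_eq, Set.image_univ]
  · intro g
    have hOSe2 : OS Cp (b ∘ e2) = OS Cp b := by
      refine OS_eq_of (fun i => mem_OS_self b (e2 i)) (fun x => ?_)
      have h1 := mem_OS_self (Cp := Cp) (b ∘ e2) (e2.symm x)
      have h2 : (b ∘ e2) (e2.symm x) = b x := by simp
      rwa [h2] at h1
    rw [hOSe2, hbOS]
    exact hstab g
end

section
/- Let π be a profinite group. Let Rep_π(𝒪) denote the category of free 𝒪-modules of finite rank equipped with a continuous 𝒪-linear π-action, and Rep_π(ℂ_p) the category of finite-dimensional ℂ_p-vector spaces equipped with a continuous ℂ_p-linear π-action, morphisms being the equivariant linear maps in each case. Let Rep_π(𝒪) ⊗ ℚ be the category with the same objects as Rep_π(𝒪) and with morphism groups Hom(Γ₁, Γ₂) ⊗_ℤ ℚ. Then the natural functor Rep_π(𝒪) ⊗ ℚ → Rep_π(ℂ_p), sending Γ to Γ ⊗_𝒪 ℂ_p, is an equivalence of categories (it is fully faithful and essentially surjective). -/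
open Submodule Set Pointwise


open Submodule Set

section aux
variable {K : Type} [NormedField K] [IsUltrametricDist K]

/-- The unit ball subring of an ultrametric normed field. -/
def ubSubring (K : Type) [NormedField K] [IsUltrametricDist K] : Subring K where
  carrier := {x | ‖x‖ ≤ 1}
  mul_mem' {a b} ha hb := by
    have ha' : ‖a‖ ≤ 1 := ha
    have hb' : ‖b‖ ≤ 1 := hb
    show ‖a * b‖ ≤ 1
    rw [norm_mul]
    nlinarith [norm_nonneg a, norm_nonneg b]
  one_mem' := by simp
  add_mem' {a b} ha hb := le_trans (IsUltrametricDist.norm_add_le_max a b) (max_le ha hb)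
  zero_mem' := by simp
  neg_mem' {a} ha := by simpa using ha

lemma ubSubring_smul_def {V : Type} [AddCommGroup V] [Module K V] (c : ubSubring K) (v : V) :
    c • v = (c : K) • v := rfl

/-- elementary row-operation invariance of spans -/
lemma span_insert_elem_ops {R M ι : Type} [CommRing R] [AddCommGroup M] [Module R M]
    (w : ι → M) (c : ι → R) (k : ι) :
    span R (insert (w k) (Set.range fun j => w j - c j • w k)) = span R (Set.range w) := by
  apply le_antisymm
  · rw [span_le]
    rintro x (rfl | ⟨j, rfl⟩)
    · exact subset_span ⟨k, rfl⟩
    · exact sub_mem (subset_span ⟨j, rfl⟩) (smul_mem _ _ (subset_span ⟨k, rfl⟩))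
  · rw [span_le]
    rintro x ⟨j, rfl⟩
    have : w j = (w j - c j • w k) + c j • w k := by abel
    rw [this]
    exact add_mem (subset_span (Set.mem_insert_of_mem _ ⟨j, rfl⟩))
      (smul_mem _ _ (subset_span (Set.mem_insert _ _)))

/-- prepend-zero linear map -/
def consL (K : Type) [NormedField K] (n : ℕ) : (Fin n → K) →ₗ[K] (Fin (n+1) → K) where
  toFun v := Fin.cons 0 v
  map_add' x y := by
    ext i
    refine Fin.cases ?_ ?_ i <;> simp
  map_smul' c x := by
    ext i
    refine Fin.cases ?_ ?_ i <;> simp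

lemma core_lemma : ∀ (n : ℕ) (ι : Type) [Fintype ι] (w : ι → (Fin n → K)),
    span K (Set.range w) = ⊤ →
    ∃ b : Fin n → (Fin n → K),
      span (ubSubring K) (Set.range b) = span (ubSubring K) (Set.range w) := by
  intro n
  induction n with
  | zero =>
    intro ι _ w _
    refine ⟨Fin.elim0, ?_⟩
    apply le_antisymm
    · rw [span_le]; rintro x ⟨j, rfl⟩; exact j.elim0
    · rw [span_le]; rintro x ⟨j, rfl⟩
      have : w j = 0 := funext fun i => i.elim0
      rw [this]; exact zero_mem _
  | succ n ih =>
    intro ι _ w hspan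
    have hex : ∃ k, w k 0 ≠ 0 := by
      by_contra h
      push_neg at h
      have hle : span K (Set.range w) ≤ LinearMap.ker (LinearMap.proj (R := K) (φ := fun _ : Fin (n+1) => K) 0) := by
        rw [span_le]; rintro x ⟨j, rfl⟩; simpa using h j
      rw [hspan] at hle
      have := hle (Submodule.mem_top (x := Pi.single (0 : Fin (n+1)) (1:K)))
      simp [LinearMap.mem_ker] at this
    obtain ⟨k, hk⟩ := hex
    haveI : Nonempty ι := ⟨k⟩
    obtain ⟨k₀, -, hmax⟩ := Finset.exists_max_image Finset.univ (fun j => ‖w j 0‖)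
      ⟨k, Finset.mem_univ k⟩
    have hk₀ : w k₀ 0 ≠ 0 := by
      intro h0
      have h1 := hmax k (Finset.mem_univ k)
      rw [h0, norm_zero] at h1
      exact hk (norm_le_zero_iff.mp h1)
    set c : ι → K := fun j => w j 0 / w k₀ 0 with hc
    have hcnorm : ∀ j, ‖c j‖ ≤ 1 := by
      intro j
      rw [hc]
      simp only [norm_div]
      rw [div_le_one (norm_pos_iff.mpr hk₀)]
      simpa using hmax j (Finset.mem_univ j)
    set u : ι → (Fin (n+1) → K) := fun j => w j - c j • w k₀ with hu
    have hu0 : ∀ j, u j 0 = 0 := by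
      intro j
      simp only [hu, Pi.sub_apply, Pi.smul_apply, smul_eq_mul, hc]
      field_simp
      ring
    have hOspan : span (ubSubring K) (insert (w k₀) (Set.range u)) = span (ubSubring K) (Set.range w) := by
      have h2 := span_insert_elem_ops (R := ubSubring K) w (fun j => (⟨c j, hcnorm j⟩ : ubSubring K)) k₀
      have h3 : (fun j => w j - (⟨c j, hcnorm j⟩ : ubSubring K) • w k₀) = u := rfl
      rw [h3] at h2
      exact h2
    have hKspan : span K (insert (w k₀) (Set.range u)) = ⊤ := by
      rw [span_insert_elem_ops w c k₀, hspan]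
    set w' : ι → (Fin n → K) := fun j => Fin.tail (u j) with hw'
    have huc : ∀ j, u j = consL K n (w' j) := by
      intro j
      show u j = Fin.cons 0 (Fin.tail (u j))
      rw [← hu0 j]
      exact (Fin.cons_self_tail (u j)).symm
    have hrangeu : Set.range u = consL K n '' Set.range w' := by
      have : u = (consL K n) ∘ w' := funext huc
      rw [this, Set.range_comp]
    have hspanu : span K (Set.range u) = Submodule.map (consL K n) (span K (Set.range w')) := by
      rw [hrangeu, Submodule.span_image]
    have hw'span : span K (Set.range w') = ⊤ := by
      rw [eq_top_iff]
      rintro v' -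
      have hv : Fin.cons 0 v' ∈ span K (insert (w k₀) (Set.range u)) := by
        rw [hKspan]; trivial
      rw [Submodule.mem_span_insert] at hv
      obtain ⟨a, z, hz, hvz⟩ := hv
      have hz0 : z 0 = 0 := by
        have hle : span K (Set.range u) ≤ LinearMap.ker (LinearMap.proj (R := K) (φ := fun _ : Fin (n+1) => K) 0) := by
          rw [span_le]; rintro x ⟨j, rfl⟩; simpa using hu0 j
        simpa using hle hz
      have ha : a = 0 := by
        have h4 := congrFun hvz 0
        simp only [Fin.cons_zero, Pi.add_apply, Pi.smul_apply, smul_eq_mul, hz0, add_zero] at h4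
        rcases mul_eq_zero.mp h4.symm with h | h
        · exact h
        · exact absurd h hk₀
      rw [ha, zero_smul, zero_add] at hvz
      rw [← hvz] at hz
      rw [hspanu] at hz
      obtain ⟨x, hx, hxe⟩ := hz
      have hvx : v' = x := by
        have h5 := congrArg Fin.tail hxe
        simp only [consL, LinearMap.coe_mk, AddHom.coe_mk, Fin.tail_cons] at h5
        exact h5.symm
      rw [hvx]; exact hx
    obtain ⟨b', hb'⟩ := ih ι w' hw'span
    refine ⟨Fin.cons (w k₀) (fun i => consL K n (b' i)), ?_⟩
    rw [Fin.range_cons, Submodule.span_insert, ← hOspan, Submodule.span_insert]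
    congr 1
    have h1 : Set.range (fun i => consL K n (b' i)) = ⇑(consL K n) '' Set.range b' := by
      rw [← Set.range_comp]; rfl
    set F := (consL K n).restrictScalars (ubSubring K) with hF
    have hmap : ∀ (s : Set (Fin n → K)), span (ubSubring K) (⇑(consL K n) '' s)
        = Submodule.map F (span (ubSubring K) s) := by
      intro s
      rw [← Submodule.span_image]
      rfl
    rw [h1, hmap, hb', ← hmap, ← hrangeu]
end aux


lemma mem_ubSubring {K : Type} [NormedField K] [IsUltrametricDist K] {x : K} :
    x ∈ ubSubring K ↔ ‖x‖ ≤ 1 := Iff.rfl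

lemma coreV {K : Type} [NormedField K] [IsUltrametricDist K]
    {V : Type} [AddCommGroup V] [Module K V] [FiniteDimensional K V]
    {ι : Type} [Fintype ι] (w : ι → V) (hspan : span K (Set.range w) = ⊤) :
    ∃ b : Fin (Module.finrank K V) → V,
      LinearIndependent K b ∧ span K (Set.range b) = ⊤ ∧
      span (ubSubring K) (Set.range b) = span (ubSubring K) (Set.range w) := by
  set n := Module.finrank K V with hn
  let φ : V ≃ₗ[K] (Fin n → K) := (Module.finBasis K V).equivFun
  have hw2 : span K (Set.range (fun j => φ (w j))) = ⊤ := by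
    have h0 : Set.range (fun j => φ (w j)) = ⇑φ.toLinearMap '' Set.range w := by
      rw [← Set.range_comp]; rfl
    rw [h0, Submodule.span_image, hspan, Submodule.map_top]
    simp
  obtain ⟨b₂, hb₂⟩ := core_lemma n ι (fun j => φ (w j)) hw2
  refine ⟨fun i => φ.symm (b₂ i), ?_, ?_, ?_⟩
  all_goals {
    set ψ := (φ.symm.toLinearMap.restrictScalars (ubSubring K)) with hψ
    have hrb : Set.range (fun i => φ.symm (b₂ i)) = ⇑ψ '' Set.range b₂ := by
      rw [← Set.range_comp]; rfl
    have hrw : ⇑ψ '' Set.range (fun j => φ (w j)) = Set.range w := by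
      rw [← Set.range_comp]
      have : (⇑ψ ∘ fun j => φ (w j)) = w := by funext j; simp [hψ]
      rw [this]
    have hOspan : span (ubSubring K) (Set.range (fun i => φ.symm (b₂ i)))
        = span (ubSubring K) (Set.range w) := by
      rw [hrb, Submodule.span_image, hb₂, ← Submodule.span_image, hrw]
    have hKtop : ⊤ ≤ span K (Set.range (fun i => φ.symm (b₂ i))) := by
      rw [← hspan, span_le]
      rintro x ⟨j, rfl⟩
      have h1 : w j ∈ span (ubSubring K) (Set.range w) := subset_span ⟨j, rfl⟩
      rw [← hOspan] at h1
      exact Submodule.span_le_restrictScalars (ubSubring K) K _ h1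
    first
    | exact linearIndependent_of_top_le_span_of_card_eq_finrank hKtop (by simp; exact hn)
    | exact top_le_iff.mp hKtop
    | exact hOspan
  }


lemma span_ub_eq_set {K V : Type} [NormedField K] [IsUltrametricDist K]
    [AddCommGroup V] [Module K V] {n : ℕ} (b : Fin n → V) :
    ((span (ubSubring K) (Set.range b) : Submodule (ubSubring K) V) : Set V)
      = {v : V | ∃ c : Fin n → K, (∀ i, ‖c i‖ ≤ 1) ∧ v = ∑ i, c i • b i} := by
  ext v
  simp only [SetLike.mem_coe, mem_span_range_iff_exists_fun, Set.mem_setOf_eq]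
  constructor
  · rintro ⟨c, rfl⟩
    exact ⟨fun i => (c i : K), fun i => mem_ubSubring.mp (c i).2, rfl⟩
  · rintro ⟨c, hc, hv⟩
    exact ⟨fun i => ⟨c i, mem_ubSubring.mpr (hc i)⟩, hv.symm⟩

lemma part1 {Cp : Type} [NormedField Cp] [CompleteSpace Cp] [IsUltrametricDist Cp]
    (hnt : ∃ x : Cp, 1 < ‖x‖)
    {π : Type} [Group π] [TopologicalSpace π] [IsTopologicalGroup π] [CompactSpace π]
    (V : Type) [NormedAddCommGroup V] [NormedSpace Cp V] [FiniteDimensional Cp V]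
    (ρ : π →* (V ≃ₗ[Cp] V)) (hcont : Continuous fun gv : π × V => ρ gv.1 gv.2) :
    ∃ (b : Fin (Module.finrank Cp V) → V) (Γ : Set V),
      LinearIndependent Cp b ∧
      Submodule.span Cp (Set.range b) = ⊤ ∧
      Γ = {v : V | ∃ c : Fin (Module.finrank Cp V) → Cp,
            (∀ i, ‖c i‖ ≤ 1) ∧ v = ∑ i, c i • b i} ∧
      ∀ g : π, (fun v => ρ g v) '' Γ = Γ := by
  letI : NontriviallyNormedField Cp := { ‹NormedField Cp› with non_trivial := hnt }
  set O := ubSubring Cp with hO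
  set n := Module.finrank Cp V with hn
  set e := Module.finBasis Cp V with he
  set ρL : π → (V →ₗ[O] V) := fun g => ((ρ g).toLinearMap.restrictScalars O) with hρL
  have hρLcoe : ∀ g, ⇑(ρL g) = ⇑(ρ g) := fun g => rfl
  set S : Set V := {v | ∃ g i, ρ g (e i) = v} with hS
  set L : Submodule O V := span O S with hL
  set L₀ : Submodule O V := span O (Set.range ⇑e) with hL₀
  have hconts : ∀ v : V, Continuous fun g : π => ρ g v := fun v =>
    hcont.comp (Continuous.prodMk continuous_id continuous_const)
  -- membership in L₀ via coordinates
  have hL₀mem : ∀ v : V, v ∈ L₀ ↔ ∀ i, ‖e.equivFun v i‖ ≤ 1 := by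
    intro v
    have hset := span_ub_eq_set (K := Cp) (V := V) ⇑e
    constructor
    · intro hv
      have hv' : v ∈ {v : V | ∃ c : Fin n → Cp, (∀ i, ‖c i‖ ≤ 1) ∧ v = ∑ i, c i • e i} := by
        rw [← hset]; exact hv
      obtain ⟨c, hc, rfl⟩ := hv'
      have hco : e.equivFun (∑ i, c i • e i) = c := by
        rw [← Module.Basis.equivFun_symm_apply, LinearEquiv.apply_symm_apply]
      intro i; rw [hco]; exact hc i
    · intro h
      have hv' : v ∈ {v : V | ∃ c : Fin n → Cp, (∀ i, ‖c i‖ ≤ 1) ∧ v = ∑ i, c i • e i} := by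
        refine ⟨fun i => e.equivFun v i, h, ?_⟩
        rw [← Module.Basis.equivFun_symm_apply, LinearEquiv.symm_apply_apply]
      rw [← hset] at hv'; exact hv'
  -- L₀ is open
  have hL₀open : IsOpen ((L₀ : Set V)) := by
    have hset2 : ((L₀ : Set V)) = ⋂ i, (fun v => e.equivFun v i) ⁻¹' (Metric.closedBall 0 1) := by
      ext v
      simp only [SetLike.mem_coe, Set.mem_iInter, Set.mem_preimage, Metric.mem_closedBall,
        dist_zero_right]
      exact hL₀mem v
    rw [hset2]
    refine isOpen_iInter_of_finite fun i => ?_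
    have hcoord : Continuous fun v : V => e.equivFun v i := by
      have : (fun v : V => e.equivFun v i)
          = ⇑((LinearMap.proj i).comp e.equivFun.toLinearMap) := rfl
      rw [this]
      exact LinearMap.continuous_of_finiteDimensional _
    exact (IsUltrametricDist.isOpen_closedBall (0 : Cp) one_ne_zero).preimage hcoord
  -- monotonicity helper
  have hmono : ∀ g : π, (∀ i, ρ g (e i) ∈ L₀) → ∀ v ∈ L₀, ρ g v ∈ L₀ := by
    intro g hg v hv
    have hle : Submodule.map (ρL g) L₀ ≤ L₀ := by
      rw [hL₀, Submodule.map_span, span_le]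
      rintro y ⟨z, ⟨i, rfl⟩, rfl⟩
      exact hg i
    exact hle ⟨v, hv, rfl⟩
  -- the open subgroup
  have hone : ∀ i, ρ (1 : π) (e i) ∈ L₀ := by
    intro i; rw [map_one]; exact subset_span ⟨i, rfl⟩
  set H : Subgroup π :=
    { carrier := {g | (∀ i, ρ g (e i) ∈ L₀) ∧ (∀ i, ρ g⁻¹ (e i) ∈ L₀)}
      one_mem' := by
        refine ⟨hone, ?_⟩; rw [inv_one]; exact hone
      mul_mem' := by
        rintro a b ⟨ha1, ha2⟩ ⟨hb1, hb2⟩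
        constructor
        · intro i
          have : ρ (a * b) (e i) = ρ a (ρ b (e i)) := by rw [map_mul]; rfl
          rw [this]
          exact hmono a ha1 _ (hb1 i)
        · intro i
          have : ρ (a * b)⁻¹ (e i) = ρ b⁻¹ (ρ a⁻¹ (e i)) := by
            rw [mul_inv_rev, map_mul]; rfl
          rw [this]
          exact hmono b⁻¹ hb2 _ (ha2 i)
      inv_mem' := by
        rintro a ⟨ha1, ha2⟩
        refine ⟨ha2, ?_⟩
        rw [inv_inv]; exact ha1 } with hH
  have hHopen : IsOpen ((H : Set π)) := by
    have hset3 : ((H : Set π)) = ⋂ i : Fin n,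
        ((fun g : π => ρ g (e i)) ⁻¹' (L₀ : Set V) ∩ (fun g : π => ρ g⁻¹ (e i)) ⁻¹' (L₀ : Set V)) := by
      ext g
      simp only [Set.mem_iInter, Set.mem_inter_iff, Set.mem_preimage, SetLike.mem_coe]
      constructor
      · rintro ⟨h1, h2⟩ i; exact ⟨h1 i, h2 i⟩
      · intro h; exact ⟨fun i => (h i).1, fun i => (h i).2⟩
    rw [hset3]
    refine isOpen_iInter_of_finite fun i => IsOpen.inter ?_ ?_
    · exact hL₀open.preimage (hconts (e i))
    · exact hL₀open.preimage ((hconts (e i)).comp continuous_inv)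
  -- finite subcover by cosets
  have hcover : (Set.univ : Set π) ⊆ ⋃ g : π, g • (H : Set π) := by
    intro x _
    exact Set.mem_iUnion.mpr ⟨x, ⟨1, H.one_mem, by simp [smul_eq_mul]⟩⟩
  obtain ⟨T, hT⟩ := isCompact_univ.elim_finite_subcover (fun g : π => g • (H : Set π))
    (fun g => hHopen.smul g) hcover
  -- generators
  set wV : {t // t ∈ T} × Fin n → V := fun ti => ρ ti.1.1 (e ti.2) with hwV
  have hmap2 : ∀ t (htT : t ∈ T) x, x ∈ L₀ → ρ t x ∈ span O (Set.range wV) := by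
    intro t htT x hx
    have hle : Submodule.map (ρL t) L₀ ≤ span O (Set.range wV) := by
      rw [hL₀, Submodule.map_span, span_le]
      rintro y ⟨z, ⟨i, rfl⟩, rfl⟩
      exact subset_span ⟨(⟨t, htT⟩, i), rfl⟩
    exact hle ⟨x, hx, rfl⟩
  have hLw : span O (Set.range wV) = L := by
    apply le_antisymm
    · rw [span_le]
      rintro x ⟨⟨t, i⟩, rfl⟩
      exact subset_span ⟨t.1, i, rfl⟩
    · rw [hL, span_le]
      rintro x ⟨g, i, rfl⟩
      have hg := hT (Set.mem_univ g)
      simp only [Set.mem_iUnion] at hg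
      obtain ⟨t, htT, h, hh, hgh⟩ := hg
      have hgh' : t * h = g := hgh
      have hρg : ρ g (e i) = ρ t (ρ h (e i)) := by rw [← hgh', map_mul]; rfl
      rw [hρg]
      exact hmap2 t htT _ (hh.1 i)
  -- T is nonempty (witness at 1)
  have h1T := hT (Set.mem_univ (1 : π))
  simp only [Set.mem_iUnion] at h1T
  obtain ⟨t₀, ht₀T, -⟩ := h1T
  -- Cp-span of generators is everything
  have hKw : span Cp (Set.range wV) = ⊤ := by
    have h2 : Submodule.map ((ρ t₀).toLinearMap) (span Cp (Set.range ⇑e))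
        ≤ span Cp (Set.range wV) := by
      rw [Submodule.map_span, span_le]
      rintro y ⟨z, ⟨i, rfl⟩, rfl⟩
      exact subset_span ⟨(⟨t₀, ht₀T⟩, i), rfl⟩
    rw [Module.Basis.span_eq, Submodule.map_top] at h2
    rw [eq_top_iff]
    refine le_trans ?_ h2
    rw [LinearEquiv.range]
  obtain ⟨b, hbi, hbtop, hbO⟩ := coreV wV hKw
  -- stability of S
  have hSimg : ∀ g : π, ⇑(ρ g) '' S = S := by
    intro g
    apply Set.Subset.antisymm
    · rintro _ ⟨_, ⟨g', i, rfl⟩, rfl⟩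
      exact ⟨g * g', i, by rw [map_mul]; rfl⟩
    · rintro _ ⟨g', i, rfl⟩
      refine ⟨ρ (g⁻¹ * g') (e i), ⟨g⁻¹ * g', i, rfl⟩, ?_⟩
      have : ρ (g * (g⁻¹ * g')) (e i) = ρ g (ρ (g⁻¹ * g') (e i)) := by rw [map_mul]; rfl
      rw [← this, mul_inv_cancel_left]
  refine ⟨b, _, hbi, hbtop, rfl, fun g => ?_⟩
  show (fun v => ρ g v) '' _ = _
  rw [← span_ub_eq_set (K := Cp) b, hbO, hLw]
  have hmapL : Submodule.map (ρL g) L = L := by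
    rw [hL, Submodule.map_span]
    congr 1
    rw [hρLcoe g]
    exact hSimg g
  calc (fun v => ρ g v) '' (L : Set V) = ⇑(ρL g) '' (L : Set V) := rfl
    _ = ↑(Submodule.map (ρL g) L) := (Submodule.map_coe _ _).symm
    _ = (L : Set V) := by rw [hmapL]


lemma norm_p_cast_lt_one (p : ℕ) [Fact (Nat.Prime p)] {Cp : Type} [NormedField Cp]
    [NormedAlgebra ℚ_[p] Cp] : ‖(p : Cp)‖ < 1 := by
  rw [← map_natCast (algebraMap ℚ_[p] Cp) p, norm_algebraMap']
  exact Padic.norm_p_lt_one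

lemma part2full {p : ℕ} [Fact (Nat.Prime p)] {Cp : Type} [NormedField Cp] [IsUltrametricDist Cp]
    [NormedAlgebra ℚ_[p] Cp]
    {V₁ V₂ : Type} [AddCommGroup V₁] [Module Cp V₁] [AddCommGroup V₂] [Module Cp V₂]
    {n₁ n₂ : ℕ} (b₁ : Fin n₁ → V₁) (b₂ : Fin n₂ → V₂)
    (hb₂i : LinearIndependent Cp b₂) (hb₂s : Submodule.span Cp (Set.range b₂) = ⊤)
    (f : V₁ →ₗ[Cp] V₂) :
    ∃ m : ℤ, m ≠ 0 ∧ ∀ v ∈ {v : V₁ | ∃ c : Fin n₁ → Cp, (∀ i, ‖c i‖ ≤ 1) ∧ v = ∑ i, c i • b₁ i},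
      (m : Cp) • f v ∈ {v : V₂ | ∃ c : Fin n₂ → Cp, (∀ i, ‖c i‖ ≤ 1) ∧ v = ∑ i, c i • b₂ i} := by
  classical
  set B₂ : Module.Basis (Fin n₂) Cp V₂ := Module.Basis.mk hb₂i (by rw [hb₂s]) with hB₂
  have hB₂coe : ∀ j, B₂ j = b₂ j := fun j => by rw [hB₂, Module.Basis.coe_mk]
  set d : Fin n₁ → Fin n₂ → Cp := fun i j => B₂.repr (f (b₁ i)) j with hd
  have hfb : ∀ i, f (b₁ i) = ∑ j, d i j • b₂ j := by
    intro i
    conv_lhs => rw [← B₂.sum_repr (f (b₁ i))]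
    refine Finset.sum_congr rfl fun j _ => ?_
    rw [hB₂coe]
  set C : ℝ := 1 + ∑ i, ∑ j, ‖d i j‖ with hC
  have hsum_nonneg : (0:ℝ) ≤ ∑ i, ∑ j, ‖d i j‖ :=
    Finset.sum_nonneg fun i _ => Finset.sum_nonneg fun j _ => norm_nonneg _
  have hCpos : (0:ℝ) < C := by rw [hC]; linarith
  have hdC : ∀ i j, ‖d i j‖ ≤ C := by
    intro i j
    have h1 : ‖d i j‖ ≤ ∑ j', ‖d i j'‖ :=
      Finset.single_le_sum (fun j' _ => norm_nonneg _) (Finset.mem_univ j)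
    have h2 : (∑ j', ‖d i j'‖) ≤ ∑ i', ∑ j', ‖d i' j'‖ :=
      Finset.single_le_sum (f := fun i' => ∑ j', ‖d i' j'‖)
        (fun i' _ => Finset.sum_nonneg fun j' _ => norm_nonneg _) (Finset.mem_univ i)
    rw [hC]; linarith
  have hplt : ‖(p : Cp)‖ < 1 := norm_p_cast_lt_one p
  obtain ⟨N, hN⟩ := exists_pow_lt_of_lt_one (one_div_pos.mpr hCpos) hplt
  refine ⟨(p : ℤ) ^ N, pow_ne_zero _ (Int.natCast_ne_zero.mpr (Fact.out (p := Nat.Prime p)).ne_zero), ?_⟩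
  rintro v ⟨c, hc, rfl⟩
  have hmCp : ((((p:ℤ) ^ N : ℤ) : Cp)) = (p : Cp) ^ N := by push_cast; ring
  have hmnorm : ‖((((p:ℤ) ^ N : ℤ) : Cp))‖ ≤ 1 / C := by
    rw [hmCp, norm_pow]; exact le_of_lt hN
  set m : Cp := (((p:ℤ) ^ N : ℤ) : Cp) with hm
  refine ⟨fun j => ∑ i, m * (c i * d i j), ?_, ?_⟩
  · intro j
    refine IsUltrametricDist.norm_sum_le_of_forall_le_of_nonneg zero_le_one fun i _ => ?_
    have : ‖m * (c i * d i j)‖ = ‖m‖ * (‖c i‖ * ‖d i j‖) := by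
      rw [norm_mul, norm_mul]
    rw [this]
    have h3 : ‖c i‖ * ‖d i j‖ ≤ C := by
      have := hdC i j
      nlinarith [norm_nonneg (c i), norm_nonneg (d i j), hc i]
    calc ‖m‖ * (‖c i‖ * ‖d i j‖) ≤ (1 / C) * C := by
          apply mul_le_mul hmnorm h3 (by positivity) (by positivity)
      _ = 1 := by field_simp
  · rw [map_sum]
    simp only [map_smul, hfb]
    simp only [Finset.smul_sum, smul_smul, Finset.sum_smul, mul_assoc]
    exact Finset.sum_comm


/-- Let `π` be a profinite group.  The natural functor
`Rep_π(𝒪) ⊗ ℚ → Rep_π(ℂ_p)`, `Γ ↦ Γ ⊗_𝒪 ℂ_p`, is an equivalence of categories, i.e. it is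
fully faithful and essentially surjective.  Objects of `Rep_π(𝒪)` are realized as
`π`-stable `𝒪`-lattices (free `𝒪`-modules spanned by bases) inside finite-dimensional
`ℂ_p`-vector spaces with continuous `π`-action.  Concretely:
(essential surjectivity) every continuous representation of `π` on a finite-dimensional
`ℂ_p`-vector space contains a `π`-stable `𝒪`-lattice, and
(full faithfulness) for two such lattices the natural map
`Hom_{𝒪[π]}(Γ₁, Γ₂) ⊗ ℚ → Hom_{ℂ_p[π]}(V₁, V₂)` is bijective: equivariant maps agreeing
on `Γ₁` agree, and every equivariant map admits a nonzero integer multiple carrying `Γ₁`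
into `Γ₂`.  Here `Cp` is any field satisfying the characterizing properties of `ℂ_p`. -/
theorem rep_O_tensor_Q_equivalent_to_rep_Cp
    {p : ℕ} [Fact (Nat.Prime p)]
    {Cp : Type} [NormedField Cp] [CompleteSpace Cp] [IsAlgClosed Cp]
    [IsUltrametricDist Cp] [NormedAlgebra ℚ_[p] Cp]
    (hdense : Dense {x : Cp | IsAlgebraic ℚ_[p] x})
    {π : Type} [Group π] [TopologicalSpace π] [IsTopologicalGroup π]
    [CompactSpace π] [TotallyDisconnectedSpace π] [T2Space π] :
    (∀ (V : Type) (_ : NormedAddCommGroup V) (_ : NormedSpace Cp V)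
        (_ : FiniteDimensional Cp V) (ρ : π →* (V ≃ₗ[Cp] V)),
      (Continuous fun gv : π × V => ρ gv.1 gv.2) →
      ∃ (b : Fin (Module.finrank Cp V) → V) (Γ : Set V),
        LinearIndependent Cp b ∧
        Submodule.span Cp (Set.range b) = ⊤ ∧
        Γ = {v : V | ∃ c : Fin (Module.finrank Cp V) → Cp,
              (∀ i, ‖c i‖ ≤ 1) ∧ v = ∑ i, c i • b i} ∧
        ∀ g : π, (fun v => ρ g v) '' Γ = Γ) ∧
    (∀ (V₁ V₂ : Type)
        (_ : NormedAddCommGroup V₁) (_ : NormedSpace Cp V₁) (_ : FiniteDimensional Cp V₁)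
        (_ : NormedAddCommGroup V₂) (_ : NormedSpace Cp V₂) (_ : FiniteDimensional Cp V₂)
        (ρ₁ : π →* (V₁ ≃ₗ[Cp] V₁)) (ρ₂ : π →* (V₂ ≃ₗ[Cp] V₂)),
      (Continuous fun gv : π × V₁ => ρ₁ gv.1 gv.2) →
      (Continuous fun gv : π × V₂ => ρ₂ gv.1 gv.2) →
      ∀ (n₁ n₂ : ℕ) (b₁ : Fin n₁ → V₁) (b₂ : Fin n₂ → V₂),
        LinearIndependent Cp b₁ → Submodule.span Cp (Set.range b₁) = ⊤ →
        LinearIndependent Cp b₂ → Submodule.span Cp (Set.range b₂) = ⊤ →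
        ∀ (Γ₁ : Set V₁) (Γ₂ : Set V₂),
          Γ₁ = {v : V₁ | ∃ c : Fin n₁ → Cp, (∀ i, ‖c i‖ ≤ 1) ∧ v = ∑ i, c i • b₁ i} →
          Γ₂ = {v : V₂ | ∃ c : Fin n₂ → Cp, (∀ i, ‖c i‖ ≤ 1) ∧ v = ∑ i, c i • b₂ i} →
          (∀ g : π, (fun v => ρ₁ g v) '' Γ₁ = Γ₁) →
          (∀ g : π, (fun v => ρ₂ g v) '' Γ₂ = Γ₂) →
          ((∀ f f' : V₁ →ₗ[Cp] V₂,
              (∀ (g : π) (v : V₁), f (ρ₁ g v) = ρ₂ g (f v)) →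
              (∀ (g : π) (v : V₁), f' (ρ₁ g v) = ρ₂ g (f' v)) →
              (∀ v ∈ Γ₁, f v = f' v) → f = f') ∧
            (∀ f : V₁ →ₗ[Cp] V₂, (∀ (g : π) (v : V₁), f (ρ₁ g v) = ρ₂ g (f v)) →
              ∃ m : ℤ, m ≠ 0 ∧ ∀ v ∈ Γ₁, (m : Cp) • f v ∈ Γ₂))) := by
  have hplt : ‖(p : Cp)‖ < 1 := norm_p_cast_lt_one p
  have hppos : (0:ℝ) < ‖(p : Cp)‖ := by
    rw [← map_natCast (algebraMap ℚ_[p] Cp) p, norm_algebraMap', Padic.norm_p]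
    have : (0:ℝ) < (p:ℝ) := by exact_mod_cast (Fact.out (p := Nat.Prime p)).pos
    positivity
  have hnt : ∃ x : Cp, 1 < ‖x‖ :=
    ⟨(p : Cp)⁻¹, by rw [norm_inv]; exact (one_lt_inv₀ hppos).mpr hplt⟩
  constructor
  · intro V i1 i2 i3 ρ hcont
    letI := i1; letI := i2; letI := i3
    exact part1 hnt V ρ hcont
  · intro V₁ V₂ i1 i2 i3 i4 i5 i6 ρ₁ ρ₂ _ _ n₁ n₂ b₁ b₂ hb₁i hb₁s hb₂i hb₂s Γ₁ Γ₂ hΓ₁ hΓ₂ _ _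
    letI := i1; letI := i2; letI := i3; letI := i4; letI := i5; letI := i6
    constructor
    · intro f f' _ _ hagree
      apply LinearMap.ext_on hb₁s
      rintro x ⟨i, rfl⟩
      apply hagree
      rw [hΓ₁]
      refine ⟨fun j => if j = i then 1 else 0, fun j => ?_, ?_⟩
      · simp only []
        split <;> simp
      · rw [eq_comm]
        simp [ite_smul]
    · intro f _
      rw [hΓ₁, hΓ₂]
      exact part2full (p := p) b₁ b₂ hb₂i hb₂s f
end

section
/- Global sections of an integral proper flat scheme over a discrete valuation ring: let R be a discrete valuation ring with fraction field K, and let f : W → Spec R be a proper flat morphism with W an integral scheme such that the canonical map K → Γ(W ×_{Spec R} Spec K, 𝒪) is an isomorphism (the generic fibre has only constant global functions). Then the canonical map R → Γ(W, 𝒪_W) is an isomorphism; equivalently f_* 𝒪_W = 𝒪_{Spec R}. -/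
open AlgebraicGeometry CategoryTheory CategoryTheory.Limits

/-- The fraction field of a DVR is the localization away from any irreducible element. -/
lemma isLocalization_away_of_dvr (R : Type) [CommRing R] [IsDomain R]
    [IsDiscreteValuationRing R] (K : Type) [Field K] [Algebra R K] [IsFractionRing R K]
    {ϖ : R} (hϖ : Irreducible ϖ) : IsLocalization.Away ϖ K := by
  constructor
  constructor
  · rintro ⟨y, n, rfl⟩
    simp only [map_pow]
    exact (isUnit_iff_ne_zero.mpr (fun h => hϖ.ne_zero
      ((map_eq_zero_iff _ (IsFractionRing.injective R K)).mp h))).pow n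
  · intro z
    obtain ⟨⟨a, b⟩, hz⟩ := IsLocalization.surj (nonZeroDivisors R) z
    have hb0 : (b : R) ≠ 0 := nonZeroDivisors.ne_zero b.2
    obtain ⟨n, u, hu⟩ := IsDiscreteValuationRing.eq_unit_mul_pow_irreducible hb0 hϖ
    refine ⟨⟨a * (↑u⁻¹ : Rˣ), ⟨ϖ ^ n, n, rfl⟩⟩, ?_⟩
    have : (algebraMap R K) (ϖ ^ n) = algebraMap R K (↑u⁻¹ : Rˣ) * algebraMap R K b := by
      rw [← map_mul]
      congr 1
      rw [hu, ← mul_assoc, Units.inv_mul, one_mul]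
    simp only [this, map_mul]
    rw [← mul_assoc, mul_comm z, mul_assoc, hz, mul_comm]
  · intro x y h
    exact ⟨1, by simpa using IsFractionRing.injective R K h⟩

/-- Global sections of an integral proper flat scheme over a discrete
valuation ring.  Let `R` be a discrete valuation ring with fraction field `K`, and let
`f : W → Spec R` be a proper flat morphism with `W` an integral scheme such that the
canonical map `K → Γ(W_K, 𝒪)` to the global sections of the generic fibre
`W_K = W ×_{Spec R} Spec K` is an isomorphism (the generic fibre has only constant global
functions).  Then the canonical map `R → Γ(W, 𝒪_W)` is an isomorphism; equivalently
`f_* 𝒪_W = 𝒪_{Spec R}`. -/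
theorem global_sections_of_model_over_dvr
    (R : Type) [CommRing R] [IsDomain R] [IsDiscreteValuationRing R]
    (K : Type) [Field K] [Algebra R K] [IsFractionRing R K]
    (W : Scheme) (f : W ⟶ Spec (CommRingCat.of R))
    (hproper : IsProper f)
    (hflat : ∀ x : W, RingHom.Flat (f.stalkMap x).hom)
    (hint : IsIntegral W)
    (g : Spec (CommRingCat.of K) ⟶ Spec (CommRingCat.of R))
    (hg : g = Spec.map (CommRingCat.ofHom (algebraMap R K)))
    (hgen : IsIso ((Scheme.ΓSpecIso (CommRingCat.of K)).inv ≫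
      Scheme.Hom.appTop (pullback.snd f g))) :
    IsIso ((Scheme.ΓSpecIso (CommRingCat.of R)).inv ≫ Scheme.Hom.appTop f) := by
  obtain ⟨ϖ, hϖ⟩ := IsDiscreteValuationRing.exists_irreducible R
  haveI : IsLocalization.Away ϖ K := isLocalization_away_of_dvr R K hϖ
  haveI hgoi : IsOpenImmersion g := by
    rw [hg]; exact IsOpenImmersion.of_isLocalization ϖ
  set α : CommRingCat.of R ⟶ CommRingCat.of K := CommRingCat.ofHom (algebraMap R K) with hα
  set φ : CommRingCat.of R ⟶ Γ(W, ⊤) :=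
    (Scheme.ΓSpecIso (CommRingCat.of R)).inv ≫ Scheme.Hom.appTop f with hφ
  set ψ := Scheme.Hom.appTop (pullback.fst f g) with hψ
  set χ : CommRingCat.of K ⟶ Γ(pullback f g, ⊤) :=
    (Scheme.ΓSpecIso (CommRingCat.of K)).inv ≫ Scheme.Hom.appTop (pullback.snd f g) with hχ
  -- the commutative square
  have hsq : φ ≫ ψ = α ≫ χ := by
    rw [hφ, hχ, hψ, Category.assoc, ← Scheme.Hom.comp_appTop, pullback.condition,
      Scheme.Hom.comp_appTop, hg, ← Scheme.ΓSpecIso_inv_naturality_assoc]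
  have hsq' : ∀ x : R, ψ (φ x) = χ (algebraMap R K x) := by
    intro x
    have := ConcreteCategory.congr_hom hsq x
    simpa [hα] using this
  have hχbij : Function.Bijective χ := (ConcreteCategory.isIso_iff_bijective χ).mp hgen
  -- the pullback is nonempty
  have hnt : Nontrivial Γ(pullback f g, ⊤) := (Equiv.ofBijective χ hχbij).symm.nontrivial
  have hne : Nonempty ↑(pullback f g) := by
    by_contra h
    rw [not_nonempty_iff] at h
    have htop : (⊤ : (pullback f g).Opens) = ⊥ := by
      ext x
      exact (h.false x).elim
    rw [htop] at hnt
    exact false_of_nontrivial_of_subsingleton Γ(pullback f g, ⊥)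
  obtain ⟨u⟩ := hne
  -- ψ is injective
  have hψinj : Function.Injective ψ := by
    have h1 : Function.Injective (W.presheaf.germ ⊤ ((pullback.fst f g).base u) trivial) :=
      germ_injective_of_isIntegral (U := ⊤) W _ trivial
    have h2 : Function.Injective ((pullback.fst f g).stalkMap u) :=
      (ConcreteCategory.bijective_of_isIso _).injective
    intro a b hab
    apply h1
    apply h2
    erw [Scheme.Hom.germ_stalkMap_apply, Scheme.Hom.germ_stalkMap_apply]
    exact congrArg _ hab
  refine (ConcreteCategory.isIso_iff_bijective _).mpr ⟨?_, ?_⟩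
  · -- injectivity
    intro x y hxy
    replace hxy : φ x = φ y := hxy
    have h3 : χ (algebraMap R K x) = χ (algebraMap R K y) := by
      rw [← hsq' x, ← hsq' y, hxy]
    exact IsFractionRing.injective R K (hχbij.injective h3)
  · -- surjectivity
    intro s
    show ∃ a : R, φ a = s
    set k : K := (Equiv.ofBijective χ hχbij).symm (ψ s) with hk
    have hχk : χ k = ψ s := (Equiv.ofBijective χ hχbij).apply_symm_apply (ψ s)
    rcases ValuationRing.isInteger_or_isInteger R k with ⟨a, ha⟩ | ⟨b, hb⟩
    · exact ⟨a, hψinj (by rw [hsq' a, ha, hχk])⟩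
    by_cases hk0 : k = 0
    · refine ⟨0, hψinj ?_⟩
      rw [hsq' 0, map_zero, map_zero, ← hχk, hk0, map_zero]
    have e : φ b * s = 1 := by
      apply hψinj
      rw [map_mul, hsq' b, ← hχk, ← map_mul, hb, inv_mul_cancel₀ hk0, map_one, map_one]
    by_cases hbu : IsUnit b
    · obtain ⟨v, rfl⟩ := hbu
      refine ⟨((v⁻¹ : Rˣ) : R), ?_⟩
      calc φ ((v⁻¹ : Rˣ) : R) = φ ((v⁻¹ : Rˣ) : R) * (φ ↑v * s) := by rw [e, mul_one]
        _ = φ (((v⁻¹ : Rˣ) : R) * ↑v) * s := by rw [map_mul, mul_assoc]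
        _ = s := by rw [Units.inv_mul, map_one, one_mul]
    exfalso
    -- find a point of W over the closed point of Spec R
    have hclosed : IsClosed (Set.range f.base) :=
      f.isClosedMap.isClosed_range
    obtain ⟨x0⟩ : Nonempty ↑W := inferInstance
    have hspec : (f.base x0 : PrimeSpectrum R) ⤳ IsLocalRing.closedPoint R :=
      IsLocalRing.specializes_closedPoint (R := R) (f.base x0)
    have hmem : IsLocalRing.closedPoint R ∈ Set.range f.base :=
      hspec.mem_closed hclosed ⟨x0, rfl⟩
    obtain ⟨w, hw⟩ := hmem
    -- the germ of `φ b` at `w` is a unit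
    have h5 : W.presheaf.germ ⊤ w trivial (φ b) * W.presheaf.germ ⊤ w trivial s = 1 := by
      rw [← map_mul, e, map_one]
    have hunit : IsUnit (W.presheaf.germ ⊤ w trivial (φ b)) := IsUnit.of_mul_eq_one _ h5
    have hw' : w ∈ W.basicOpen (φ b) := (W.mem_basicOpen_top (φ b) w).mpr hunit
    have hb1 : W.basicOpen (φ b) = f ⁻¹ᵁ PrimeSpectrum.basicOpen b := by
      rw [← basicOpen_eq_of_affine (R := CommRingCat.of R) b]
      exact (Scheme.preimage_basicOpen_top f _).symm
    rw [hb1] at hw'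
    have h7 : f.base w ∈ PrimeSpectrum.basicOpen b := hw'
    rw [hw] at h7; change b ∉ (IsLocalRing.closedPoint R).asIdeal at h7
    exact h7 ((IsLocalRing.mem_maximalIdeal b).mpr (mem_nonunits_iff.mpr hbu))
end
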